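/- arXiv:2201.08212 — 5 statements merged into one kernel-verified Lean document; each statement's English description precedes it below -/
import Mathlib

section
/- Let p, x, y, t be points in a Euclidean affine space over ℝ such that x lies strictly between p and y (so p ≠ x), and suppose dist p t ^ 2 = dist p x * dist p y (the power-of-a-point relation of the tangent–secant theorem). If dist x y = dist p t (the chord equals the tangent), then dist p y = φ * dist p t and dist p t = φ * dist p x, where φ = (1 + √5)/2 is the golden ratio. -/
/-! Betweenness splits the secant as `dist p y = b + a` (external part plus chord), so the
tangent–secant relation becomes `a² = b (b + a)`. Hence `a / b` is the positive root `φ` of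
`X² - X - 1`, and then `b + a = (1 + φ) b = φ² b = φ a`. -/

open Real goldenRatio

theorem eq_goldenRatio_mul_of_sq_eq_mul_add {a b : ℝ} (ha : 0 ≤ a) (hb : 0 ≤ b)
    (h : a ^ 2 = b * (b + a)) : a = φ * b := by
  have hfactor : (a - φ * b) * (a - ψ * b) = 0 := by
    linear_combination h - a * b * goldenRatio_add_goldenConj + b ^ 2 * goldenRatio_mul_goldenConj
  rcases mul_eq_zero.1 hfactor with hφ | hψ
  · linarith
  · have hb0 : b = 0 := by nlinarith [goldenConj_neg]
    subst hb0
    linarith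

theorem add_eq_goldenRatio_mul_of_eq_goldenRatio_mul {a b : ℝ} (h : a = φ * b) :
    b + a = φ * a := by
  subst h
  linear_combination (-b) * goldenRatio_sq

/-- Power-of-a-point form: if `x` lies strictly between `p` and `y`,
`dist p t ^ 2 = dist p x * dist p y`, and the chord equals the tangent
(`dist x y = dist p t`), then `dist p y = φ * dist p t` and
`dist p t = φ * dist p x` with `φ = (1 + √5)/2`. -/
theorem power_point_chord_eq_tangent_golden {V P : Type*} [NormedAddCommGroup V]
    [InnerProductSpace ℝ V] [MetricSpace P] [NormedAddTorsor V P]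
    (p x y t : P) (hxy : Sbtw ℝ p x y)
    (hpow : dist p t ^ 2 = dist p x * dist p y)
    (hchord : dist x y = dist p t) :
    dist p y = (1 + Real.sqrt 5) / 2 * dist p t ∧
      dist p t = (1 + Real.sqrt 5) / 2 * dist p x := by
  have hsecant : dist p y = dist p x + dist p t := by
    rw [← hxy.wbtw.dist_add_dist, hchord]
  have htangent : dist p t = φ * dist p x :=
    eq_goldenRatio_mul_of_sq_eq_mul_add dist_nonneg dist_nonneg (hsecant ▸ hpow)
  exact ⟨hsecant.trans (add_eq_goldenRatio_mul_of_eq_goldenRatio_mul htangent), htangent⟩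
end

section
/- Let p, w, t, x, y be points in the Euclidean plane EuclideanSpace ℝ (Fin 2), let r > 0, and suppose t, x, y lie on the circle of center w and radius r (dist w t = dist w x = dist w y = r), the segment pt is tangent to the circle at t (i.e. the inner product ⟪p − t, w − t⟫ = 0 and p ≠ t), and x lies strictly between p and y. If dist x y = dist p t (the chord equals the tangent), then dist p t / dist p x = φ and dist p y / dist p t = φ, where φ = (1 + √5)/2 is the golden ratio. -/
open RealInnerProductSpace

/-! If `a = dist p x` and the chord equals the tangent `b = dist p t`, the tangent–secant theorem
reads `b ^ 2 = a * (a + b)`, so `b / a` is the positive root of `q ^ 2 = q + 1`. -/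

namespace Real

open goldenRatio

theorem div_eq_goldenRatio_of_sq_eq_mul_add {a b : ℝ} (ha : 0 < a) (hb : 0 ≤ b)
    (h : b ^ 2 = a * (a + b)) : b / a = φ := by
  have hq : (b / a) ^ 2 = b / a + 1 := by
    rw [div_pow, h]; field_simp; ring
  have hfactor : (b / a - φ) * (b / a - ψ) = 0 := by
    linear_combination hq - b / a * goldenRatio_add_goldenConj + goldenRatio_mul_goldenConj
  have hψ : b / a - ψ ≠ 0 := by
    have := div_nonneg hb ha.le
    linarith [goldenConj_neg]
  exact sub_eq_zero.mp ((mul_eq_zero.mp hfactor).resolve_right hψ)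

theorem add_div_eq_goldenRatio_of_sq_eq_mul_add {a b : ℝ} (ha : 0 < a) (hb : 0 ≤ b)
    (h : b ^ 2 = a * (a + b)) : (a + b) / b = φ := by
  have hb' : b ≠ 0 := by rintro rfl; nlinarith
  rw [← div_eq_goldenRatio_of_sq_eq_mul_add ha hb h, div_eq_div_iff hb' ha.ne']
  linear_combination -h

end Real

namespace EuclideanGeometry.Sphere

variable {V P : Type*} [NormedAddCommGroup V] [InnerProductSpace ℝ V] [MetricSpace P]
  [NormedAddTorsor V P]

theorem isTangentAt_of_inner_vsub_eq_zero {s : Sphere P} {p t : P} (ht : t ∈ s)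
    (h : ⟪p -ᵥ t, s.center -ᵥ t⟫ = 0) : s.IsTangentAt t line[ℝ, p, t] := by
  refine isTangentAt_of_dist_sq_eq_power ht ?_
  have hpyth := (norm_sub_sq_eq_norm_sq_add_norm_sq_iff_real_inner_eq_zero _ _).mpr h
  rw [vsub_sub_vsub_cancel_right] at hpyth
  rw [power, ← mem_sphere'.mp ht, dist_eq_norm_vsub V, dist_eq_norm_vsub V, dist_eq_norm_vsub V]
  linear_combination -hpyth

end EuclideanGeometry.Sphere

open EuclideanGeometry

theorem tangent_secant_config_chord_eq_tangent_golden_general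
    (p w t x y : EuclideanSpace ℝ (Fin 2)) (r : ℝ)
    (ht : dist w t = r) (hx : dist w x = r) (hy : dist w y = r)
    (htan : ⟪p - t, w - t⟫ = 0)
    (hxy : Sbtw ℝ p x y)
    (hchord : dist x y = dist p t) :
    dist p t / dist p x = (1 + Real.sqrt 5) / 2 ∧
      dist p y / dist p t = (1 + Real.sqrt 5) / 2 := by
  let s : Sphere (EuclideanSpace ℝ (Fin 2)) := ⟨w, r⟩
  have htangent : s.IsTangentAt t line[ℝ, p, t] :=
    Sphere.isTangentAt_of_inner_vsub_eq_zero (mem_sphere'.mpr ht) htan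
  have hp : p ∈ line[ℝ, x, y] :=
    hxy.wbtw.collinear.mem_affineSpan_of_mem_of_ne (by simp) (by simp) (by simp) hxy.ne_right
  have hpower := Sphere.dist_sq_eq_mul_dist_of_tangent_and_secant (mem_sphere'.mpr hx)
    (mem_sphere'.mpr hy) hp htangent
  have hpy : dist p y = dist p x + dist p t := by rw [← hchord, hxy.wbtw.dist_add_dist]
  have hpx : 0 < dist p x := dist_pos.mpr hxy.ne_left.symm
  rw [hpy] at hpower ⊢
  exact ⟨Real.div_eq_goldenRatio_of_sq_eq_mul_add hpx dist_nonneg hpower,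
    Real.add_div_eq_goldenRatio_of_sq_eq_mul_add hpx dist_nonneg hpower⟩

/-- Geometric form of the new theorem: in a tangent–secant configuration in the plane,
if the chord equals the tangent then tangent/external-secant and secant/tangent both
equal the golden ratio `(1 + √5)/2`. -/
theorem tangent_secant_config_chord_eq_tangent_golden
    (p w t x y : EuclideanSpace ℝ (Fin 2)) (r : ℝ) (hr : 0 < r)
    (ht : dist w t = r) (hx : dist w x = r) (hy : dist w y = r)
    (htan : ⟪p - t, w - t⟫ = 0) (hpt : p ≠ t)
    (hxy : Sbtw ℝ p x y)
    (hchord : dist x y = dist p t) :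
    dist p t / dist p x = (1 + Real.sqrt 5) / 2 ∧
      dist p y / dist p t = (1 + Real.sqrt 5) / 2 :=
  tangent_secant_config_chord_eq_tangent_golden_general p w t x y r ht hx hy htan hxy hchord
end

section
/- Let p, w, t, x, y be points in the Euclidean plane EuclideanSpace ℝ (Fin 2), let r > 0, and suppose t, x, y lie on the circle of center w and radius r, the segment pt is tangent to the circle at t (⟪p − t, w − t⟫ = 0 and p ≠ t), the points t, x, y are pairwise distinct, and x lies strictly between p and y. Let α = ∠ t p y be the angle at p between the tangent and the secant and β = ∠ x y t the angle at y in the inscribed triangle. Then the chord satisfies dist x y = 2 r * sin (α + 2 β). -/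
/-!
By the tangent–chord angle theorem, `∠ p t x = ∠ t y x = β`: doubled oriented angles give
`2 ∡ p t x = 2 ∡ p t w + 2 ∡ w t x = π + 2 ∡ w t x = 2 ∡ t y x` (right angle at the tangency
point, inscribed angle theorem), so the unoriented angles are equal or supplementary, and the
supplementary case is excluded because `x` lies between `p` and `y`. The angle sum of the triangle
`p t x`, whose angle at `x` is exterior to the triangle `t x y`, then gives
`α + 2 β = π - ∠ x t y`, and the extended law of sines in `t x y` gives
`dist x y = 2 r sin ∠ x t y`.
-/

open RealInnerProductSpace EuclideanGeometry

namespace EuclideanGeometry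

open Module Real

variable {V P : Type*} [NormedAddCommGroup V] [InnerProductSpace ℝ V] [MetricSpace P]
  [NormedAddTorsor V P]

theorem Sphere.not_collinear_of_mem_of_ne {s : Sphere P} {p₁ p₂ p₃ : P} (hp₁ : p₁ ∈ s)
    (hp₂ : p₂ ∈ s) (hp₃ : p₃ ∈ s) (h₁₂ : p₁ ≠ p₂) (h₁₃ : p₁ ≠ p₃) (h₂₃ : p₂ ≠ p₃) :
    ¬Collinear ℝ ({p₁, p₂, p₃} : Set P) :=
  affineIndependent_iff_not_collinear_set.1 <|
    (s.cospherical.subset (by simp [Set.insert_subset_iff, hp₁, hp₂, hp₃])).affineIndependent_of_ne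
      h₁₂ h₁₃ h₂₃

section Oriented

variable [Fact (finrank ℝ V = 2)] [Module.Oriented ℝ V (Fin 2)]

theorem two_zsmul_oangle_eq_pi_of_inner_eq_zero {p₁ p₂ p₃ : P} (hp₁ : p₁ ≠ p₂) (hp₃ : p₃ ≠ p₂)
    (h : ⟪p₁ -ᵥ p₂, p₃ -ᵥ p₂⟫ = 0) : (2 : ℤ) • ∡ p₁ p₂ p₃ = π := by
  rw [Real.Angle.two_zsmul_eq_pi_iff]
  simpa [oangle, hp₁, hp₃] using
    (Module.Oriented.positiveOrientation.eq_zero_or_oangle_eq_iff_inner_eq_zero).2 h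

theorem angle_eq_or_eq_pi_sub_of_two_zsmul_oangle_eq {p₁ p₂ p₃ p₄ p₅ p₆ : P}
    (h : (2 : ℤ) • ∡ p₁ p₂ p₃ = (2 : ℤ) • ∡ p₄ p₅ p₆) (hp₁ : p₁ ≠ p₂) (hp₃ : p₃ ≠ p₂)
    (hp₄ : p₄ ≠ p₅) (hp₆ : p₆ ≠ p₅) :
    ∠ p₁ p₂ p₃ = ∠ p₄ p₅ p₆ ∨ ∠ p₁ p₂ p₃ = π - ∠ p₄ p₅ p₆ := by
  have hcos : |cos (∠ p₁ p₂ p₃)| = |cos (∠ p₄ p₅ p₆)| := by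
    rw [← cos_oangle_eq_cos_angle hp₁ hp₃, ← cos_oangle_eq_cos_angle hp₄ hp₆]
    exact Real.Angle.abs_cos_eq_of_two_zsmul_eq h
  have hmem : ∀ {a b c : P}, ∠ a b c ∈ Set.Icc 0 π := ⟨angle_nonneg _ _ _, angle_le_pi _ _ _⟩
  rcases abs_eq_abs.1 hcos with h | h
  · exact .inl (injOn_cos hmem hmem h)
  · refine .inr (injOn_cos hmem ⟨?_, ?_⟩ (by rw [cos_pi_sub, h]))
    · linarith [angle_le_pi p₄ p₅ p₆]
    · linarith [angle_nonneg p₄ p₅ p₆]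

theorem Sphere.two_zsmul_oangle_tangent_eq {s : Sphere P} {p t x y : P} (ht : t ∈ s)
    (hx : x ∈ s) (hy : y ∈ s) (htan : ⟪p -ᵥ t, s.center -ᵥ t⟫ = 0) (hpt : p ≠ t)
    (htx : t ≠ x) (hty : t ≠ y) (hxy : x ≠ y) :
    (2 : ℤ) • ∡ p t x = (2 : ℤ) • ∡ t y x := by
  have hct : s.center ≠ t := by
    rintro rfl
    exact htx (dist_eq_zero.1 (by rw [mem_sphere'.1 hx, s.center_mem_iff.1 ht]))
  have hright : (2 : ℤ) • ∡ p t s.center = π :=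
    two_zsmul_oangle_eq_pi_of_inner_eq_zero hpt hct htan
  have hinscribed : (2 : ℤ) • ∡ x t s.center + (2 : ℤ) • ∡ t y x = π :=
    s.two_zsmul_oangle_center_add_two_zsmul_oangle_eq_pi ht hy hx hty.symm hxy.symm htx
  rw [← oangle_add hpt hct htx.symm, smul_add, hright, ← hinscribed, oangle_rev x t, smul_neg]
  abel

end Oriented

section Plane

variable [hd2 : Fact (finrank ℝ V = 2)]

attribute [local instance] FiniteDimensional.of_fact_finrank_eq_two

theorem Sphere.dist_eq_two_mul_radius_mul_sin_angle {s : Sphere P} {p₁ p₂ p₃ : P}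
    (hp₁ : p₁ ∈ s) (hp₂ : p₂ ∈ s) (hp₃ : p₃ ∈ s) (h₁₂ : p₁ ≠ p₂) (h₁₃ : p₁ ≠ p₃)
    (h₂₃ : p₂ ≠ p₃) : dist p₁ p₃ = 2 * s.radius * sin (∠ p₁ p₂ p₃) := by
  let _ : Module.Oriented ℝ V (Fin 2) := ⟨(finBasisOfFinrankEq _ _ hd2.out).orientation⟩
  have hsin : |(∡ p₁ p₂ p₃).sin| = sin (∠ p₁ p₂ p₃) := by
    rw [← Real.Angle.sin_toReal, abs_sin_eq_sin_abs_of_abs_le_pi (Real.Angle.abs_toReal_le_pi _),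
      ← angle_eq_abs_oangle_toReal h₁₂ h₂₃.symm]
  have hpos : 0 < sin (∠ p₁ p₂ p₃) :=
    sin_pos_of_not_collinear (s.not_collinear_of_mem_of_ne hp₁ hp₂ hp₃ h₁₂ h₁₃ h₂₃)
  rw [← s.dist_div_sin_oangle_eq_two_mul_radius hp₁ hp₂ hp₃ h₁₂ h₁₃ h₂₃, hsin,
    div_mul_cancel₀ _ hpos.ne']

theorem Sphere.angle_tangent_eq_angle_of_sbtw {s : Sphere P} {p t x y : P} (ht : t ∈ s)
    (hx : x ∈ s) (hy : y ∈ s) (htan : ⟪p -ᵥ t, s.center -ᵥ t⟫ = 0) (hpt : p ≠ t)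
    (htx : t ≠ x) (hty : t ≠ y) (hpxy : Sbtw ℝ p x y) : ∠ p t x = ∠ t y x := by
  let _ : Module.Oriented ℝ V (Fin 2) := ⟨(finBasisOfFinrankEq _ _ hd2.out).orientation⟩
  have hxy : x ≠ y := hpxy.ne_right
  refine (angle_eq_or_eq_pi_sub_of_two_zsmul_oangle_eq
    (s.two_zsmul_oangle_tangent_eq ht hx hy htan hpt htx hty hxy) hpt htx.symm hty
    hxy).resolve_right fun hsupp => ?_
  -- the supplementary case would force `∠ x t y = 0`
  have hθ : 0 < ∠ x t y :=
    angle_pos_of_not_collinear (s.not_collinear_of_mem_of_ne hx ht hy htx.symm hxy hty)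
  have hext : ∠ t x p = ∠ x t y + ∠ t y x := exterior_angle_eq_angle_add_angle p hpxy
  have hsum : ∠ p t x + ∠ t x p + ∠ x p t = π := angle_add_angle_add_angle_eq_pi x hpt.symm
  linarith [angle_nonneg x p t]

end Plane

end EuclideanGeometry

theorem tangent_secant_chord_eq_two_r_sin_general
    (p w t x y : EuclideanSpace ℝ (Fin 2)) (r : ℝ)
    (ht : dist w t = r) (hx : dist w x = r) (hy : dist w y = r)
    (htan : ⟪p - t, w - t⟫ = 0) (hpt : p ≠ t)
    (htx : t ≠ x) (hty : t ≠ y)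
    (hxy : Sbtw ℝ p x y) :
    dist x y = 2 * r * Real.sin (∠ t p y + 2 * ∠ x y t) := by
  have : Fact (Module.finrank ℝ (EuclideanSpace ℝ (Fin 2)) = 2) := ⟨finrank_euclideanSpace_fin⟩
  let s : Sphere (EuclideanSpace ℝ (Fin 2)) := ⟨w, r⟩
  have hts : t ∈ s := mem_sphere'.2 ht
  have hxs : x ∈ s := mem_sphere'.2 hx
  have hys : y ∈ s := mem_sphere'.2 hy
  have hchord : dist x y = 2 * r * Real.sin (∠ x t y) :=
    s.dist_eq_two_mul_radius_mul_sin_angle hxs hts hys htx.symm hxy.ne_right hty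
  have htangent : ∠ p t x = ∠ t y x :=
    s.angle_tangent_eq_angle_of_sbtw hts hxs hys htan hpt htx hty hxy
  have hext : ∠ t x p = ∠ x t y + ∠ t y x := exterior_angle_eq_angle_add_angle p hxy
  have hsum : ∠ p t x + ∠ t x p + ∠ x p t = Real.pi := angle_add_angle_add_angle_eq_pi x hpt.symm
  have hα : ∠ x p t = ∠ t p y := by
    rw [angle_comm]; exact angle_eq_angle_of_angle_eq_pi t hxy.angle₁₂₃_eq_pi
  rw [hchord, show ∠ t p y + 2 * ∠ x y t = Real.pi - ∠ x t y by
    rw [angle_comm x y t]; linarith, Real.sin_pi_sub]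

/-- Equation (11) of the paper, rewritten: in a tangent–secant configuration in the
plane, with `α = ∠ t p y` and `β = ∠ x y t`, the chord satisfies
`dist x y = 2 r * sin (α + 2 β)`. -/
theorem tangent_secant_chord_eq_two_r_sin
    (p w t x y : EuclideanSpace ℝ (Fin 2)) (r : ℝ) (hr : 0 < r)
    (ht : dist w t = r) (hx : dist w x = r) (hy : dist w y = r)
    (htan : ⟪p - t, w - t⟫ = 0) (hpt : p ≠ t)
    (htx : t ≠ x) (hty : t ≠ y) (hxy' : x ≠ y)
    (hxy : Sbtw ℝ p x y) :
    dist x y = 2 * r * Real.sin (∠ t p y + 2 * ∠ x y t) :=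
  tangent_secant_chord_eq_two_r_sin_general p w t x y r ht hx hy htan hpt htx hty hxy
end

section
/- Let p, w, t, x, y be points in the Euclidean plane EuclideanSpace ℝ (Fin 2), let r > 0, and suppose t, x, y lie on the circle of center w and radius r, the segment pt is tangent to the circle at t (⟪p − t, w − t⟫ = 0 and p ≠ t), the points t, x, y are pairwise distinct, x lies strictly between p and y, and the chord equals the tangent: dist x y = dist p t. Let α = ∠ x p t and β = ∠ p t x. Then sin (α + β) = φ * sin β, where φ = (1 + √5)/2 is the golden ratio. -/
/-!
By the tangent–secant theorem `PT² = PX · PY = PX · (PX + XY)`, so when the chord `XY` equals the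
tangent `PT` the ratio `PT / PX` is a positive root of `z² = z + 1`, i.e. the golden ratio. In
triangle `PTX` the angle at `X` is `π - (α + β)`, so the law of sines reads
`sin (α + β) · PX = sin β · PT = φ · sin β · PX`.
-/

open RealInnerProductSpace EuclideanGeometry
open scoped goldenRatio

namespace Real

theorem eq_goldenRatio_mul_of_sq_eq_mul_add {a b : ℝ} (ha : 0 ≤ a) (hb : 0 < b)
    (h : a ^ 2 = b * (b + a)) : a = φ * b := by
  have hfactor : (a - φ * b) * (a - ψ * b) = 0 := by
    linear_combination h - b * (a + b) * goldenRatio_add_goldenConj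
      + b ^ 2 * goldenRatio_mul_goldenConj
  have hpos : 0 < a - ψ * b := by nlinarith [goldenConj_neg]
  linarith [(mul_eq_zero.1 hfactor).resolve_right hpos.ne']

end Real

namespace EuclideanGeometry

variable {V P : Type*} [NormedAddCommGroup V] [InnerProductSpace ℝ V] [MetricSpace P]
  [NormedAddTorsor V P]

theorem Sphere.isTangentAt_affineSpan_pair_of_inner_eq_zero {s : Sphere P} {p t : P}
    (ht : t ∈ s) (h : ⟪p -ᵥ t, s.center -ᵥ t⟫ = 0) : s.IsTangentAt t line[ℝ, p, t] := by
  have hp : p ∈ s.orthRadius t := by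
    rw [Sphere.mem_orthRadius_iff_inner_left, ← neg_vsub_eq_vsub_rev s.center t,
      inner_neg_right, h, neg_zero]
  exact ⟨ht, right_mem_affineSpan_pair ℝ p t,
    affineSpan_pair_le_of_mem_of_mem hp (s.self_mem_orthRadius t)⟩

theorem sin_angle_add_angle_mul_dist_eq_sin_angle_mul_dist {p₁ p₂ p₃ : P} (h : p₃ ≠ p₂) :
    Real.sin (∠ p₂ p₃ p₁ + ∠ p₃ p₁ p₂) * dist p₂ p₃ = Real.sin (∠ p₃ p₁ p₂) * dist p₃ p₁ := by
  have hsum := angle_add_angle_add_angle_eq_pi p₁ h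
  rw [← law_sin, ← Real.sin_pi_sub, ← hsum, add_sub_cancel_left]

end EuclideanGeometry

theorem tangent_secant_golden_sine_relation_general
    (p w t x y : EuclideanSpace ℝ (Fin 2)) (r : ℝ)
    (ht : dist w t = r) (hx : dist w x = r) (hy : dist w y = r)
    (htan : ⟪p - t, w - t⟫ = 0)
    (hxy : Sbtw ℝ p x y)
    (hchord : dist x y = dist p t) :
    Real.sin (∠ x p t + ∠ p t x) = (1 + Real.sqrt 5) / 2 * Real.sin (∠ p t x) := by
  let s : Sphere (EuclideanSpace ℝ (Fin 2)) := ⟨w, r⟩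
  have htangent : s.IsTangentAt t line[ℝ, p, t] :=
    Sphere.isTangentAt_affineSpan_pair_of_inner_eq_zero (mem_sphere'.2 ht) htan
  have hp : p ∈ line[ℝ, x, y] :=
    hxy.wbtw.collinear.mem_affineSpan_of_mem_of_ne (by simp) (by simp) (by simp) hxy.right_ne.symm
  have hpower := Sphere.dist_sq_eq_mul_dist_of_tangent_and_secant
    (mem_sphere'.2 hx) (mem_sphere'.2 hy) hp htangent
  rw [← hxy.wbtw.dist_add_dist, hchord] at hpower
  have hpx : 0 < dist p x := dist_pos.2 hxy.left_ne
  have hgolden := Real.eq_goldenRatio_mul_of_sq_eq_mul_add dist_nonneg hpx hpower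
  have hsine := sin_angle_add_angle_mul_dist_eq_sin_angle_mul_dist (p₁ := t) hxy.left_ne
  rw [hgolden, dist_comm x p] at hsine
  exact mul_right_cancel₀ hpx.ne' (by linear_combination hsine)

/-- Equation (13) of the paper: in the golden-ratio tangent–secant configuration
(chord equals tangent), with `α = ∠ x p t` and `β = ∠ p t x`, one has
`sin (α + β) = φ * sin β` where `φ = (1 + √5)/2`. -/
theorem tangent_secant_golden_sine_relation
    (p w t x y : EuclideanSpace ℝ (Fin 2)) (r : ℝ) (hr : 0 < r)
    (ht : dist w t = r) (hx : dist w x = r) (hy : dist w y = r)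
    (htan : ⟪p - t, w - t⟫ = 0) (hpt : p ≠ t)
    (htx : t ≠ x) (hty : t ≠ y) (hxy' : x ≠ y)
    (hxy : Sbtw ℝ p x y)
    (hchord : dist x y = dist p t) :
    Real.sin (∠ x p t + ∠ p t x) = (1 + Real.sqrt 5) / 2 * Real.sin (∠ p t x) :=
  tangent_secant_golden_sine_relation_general p w t x y r ht hx hy htan hxy hchord
end

section
/- Let p, w, t, x, y be points in the Euclidean plane EuclideanSpace ℝ (Fin 2), let r > 0, and suppose t, x, y lie on the circle of center w and radius r, the segment pt is tangent to the circle at t (⟪p − t, w − t⟫ = 0 and p ≠ t), x lies strictly between p and y, and the secant passes through the center so that the chord is a diameter: dist x y = 2 r. If moreover the tangent equals the chord, dist p t = 2 r, then dist p x = (√5 − 1) * r, dist p y = (√5 + 1) * r = φ * dist p t with φ = (1 + √5)/2 the golden ratio, and the angle α = ∠ t p y satisfies tan α = 1/2. -/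
open RealInnerProductSpace EuclideanGeometry

/-! The radius `wt` is perpendicular to the tangent, so Pythagoras gives `dist p w = √5 r`, and in
the right triangle `ptw` the angle at `p` has tangent `r / (2 r)`. Since the chord is a diameter,
the secant passes through `w` and meets the circle at distances `√5 r ∓ r` from `p`. -/

section StrictConvex

variable {V P : Type*} [NormedAddCommGroup V] [NormedSpace ℝ V] [StrictConvexSpace ℝ V]
  [MetricSpace P] [NormedAddTorsor V P]

theorem Wbtw.wbtw_center_of_dist_eq_two_mul {p w x y : P} {r : ℝ} (h : Wbtw ℝ p x y)
    (hx : dist w x = r) (hy : dist w y = r) (hdiam : dist x y = 2 * r) : Wbtw ℝ p w y := by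
  -- a chord of length `2 r` is a diameter
  have hxwy : Wbtw ℝ x w y := by
    rw [← dist_add_dist_eq_iff, dist_comm x w, hx, hy, hdiam, two_mul]
  exact h.trans_right hxwy

end StrictConvex

theorem tangent_secant_diameter_case_general
    (p w t x y : EuclideanSpace ℝ (Fin 2)) (r : ℝ) (hr : 0 < r)
    (ht : dist w t = r) (hx : dist w x = r) (hy : dist w y = r)
    (htan : ⟪p - t, w - t⟫ = 0)
    (hxy : Sbtw ℝ p x y)
    (hdiam : dist x y = 2 * r)
    (hchord : dist p t = 2 * r) :
    dist p x = (Real.sqrt 5 - 1) * r ∧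
      dist p y = (Real.sqrt 5 + 1) * r ∧
      dist p y = (1 + Real.sqrt 5) / 2 * dist p t ∧
      Real.tan (∠ t p y) = 1 / 2 := by
  have hright : ∠ p t w = Real.pi / 2 :=
    (InnerProductGeometry.inner_eq_zero_iff_angle_eq_pi_div_two _ _).1 htan
  have hpw : dist p w = Real.sqrt 5 * r := by
    have hpyth := (dist_sq_eq_dist_sq_add_dist_sq_iff_angle_eq_pi_div_two p t w).2 hright
    rw [hchord, ht] at hpyth
    rw [← Real.sqrt_mul_self dist_nonneg, hpyth, show 2 * r * (2 * r) + r * r = 5 * (r * r) by ring,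
      Real.sqrt_mul (by norm_num), Real.sqrt_mul_self hr.le]
  have hpwy : Wbtw ℝ p w y := hxy.wbtw.wbtw_center_of_dist_eq_two_mul hx hy hdiam
  have hpy : dist p y = (Real.sqrt 5 + 1) * r := by
    linarith [hpwy.dist_add_dist]
  have hpx : dist p x = (Real.sqrt 5 - 1) * r := by
    linarith [hxy.wbtw.dist_add_dist]
  have hwp : w ≠ p := by
    rw [← dist_pos, dist_comm, hpw]; positivity
  have htan' : Real.tan (∠ t p y) = 1 / 2 := by
    rw [← hpwy.angle_eq_right t hwp, tan_angle_of_angle_eq_pi_div_two (by rwa [angle_comm]),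
      ht, hchord]
    field_simp
  exact ⟨hpx, hpy, by rw [hpy, hchord]; ring, htan'⟩

/-- Figure 8 of the paper: tangent–secant configuration where the chord is a diameter
(`dist x y = 2r`) and the tangent equals the chord (`dist p t = 2r`). Then
`dist p x = (√5 − 1) r`, `dist p y = (√5 + 1) r = φ * dist p t`, and the angle
`α = ∠ t p y` satisfies `tan α = 1/2`. -/
theorem tangent_secant_diameter_case
    (p w t x y : EuclideanSpace ℝ (Fin 2)) (r : ℝ) (hr : 0 < r)
    (ht : dist w t = r) (hx : dist w x = r) (hy : dist w y = r)
    (htan : ⟪p - t, w - t⟫ = 0) (hpt : p ≠ t)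
    (hxy : Sbtw ℝ p x y)
    (hdiam : dist x y = 2 * r)
    (hchord : dist p t = 2 * r) :
    dist p x = (Real.sqrt 5 - 1) * r ∧
      dist p y = (Real.sqrt 5 + 1) * r ∧
      dist p y = (1 + Real.sqrt 5) / 2 * dist p t ∧
      Real.tan (∠ t p y) = 1 / 2 :=
  tangent_secant_diameter_case_general p w t x y r hr ht hx hy htan hxy hdiam hchord
end
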